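/- arXiv:1310.1879 — 2 statements merged into one kernel-verified Lean document; each statement's English description precedes it below -/
import Mathlib

section
/- For every simple graph G, all vertices x, y of G, and every k ≥ 0, the compressed graph G_{x→y} satisfies m_k(G_{x→y}) ≤ m_k(G). -/
open Classical

/-- `N_G(x, ȳ)`: the set of vertices other than `x` and `y` adjacent to `x`
but not to `y`. -/
def sideNbhd {V : Type*} (G : SimpleGraph V) (x y : V) : Set V :=
  {v | v ≠ x ∧ v ≠ y ∧ G.Adj x v ∧ ¬ G.Adj y v}

/-- The compression `G_{x→y}` of `G` from `x` to `y`: delete all edges between `x`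
and `N_G(x, ȳ)` and add all edges between `y` and `N_G(x, ȳ)`. -/
def compress {V : Type*} (G : SimpleGraph V) (x y : V) : SimpleGraph V :=
  SimpleGraph.fromEdgeSet
    ((G.edgeSet \ {e | ∃ v ∈ sideNbhd G x y, e = s(x, v)}) ∪
      {e | ∃ v ∈ sideNbhd G x y, e = s(y, v)})

/-- `d₂(G) = Σ_v deg(v)²`. -/
noncomputable def d2 {V : Type*} [Fintype V] (G : SimpleGraph V) : ℕ :=
  ∑ v : V, (G.neighborSet v).ncard ^ 2

/-- The closed neighborhood `N_G[x]`. -/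
def closedNbhd {V : Type*} (G : SimpleGraph V) (x : V) : Set V :=
  insert x (G.neighborSet x)

/-- The set of matchings of a simple graph `G`: sets of pairwise non-incident edges
(the empty set counts). -/
noncomputable def graphMatchings {V : Type*} [Fintype V] (G : SimpleGraph V) :
    Finset (Finset (Sym2 V)) :=
  G.edgeFinset.powerset.filter fun M => ∀ e ∈ M, ∀ f ∈ M, e ≠ f → ∀ v : V, v ∈ e → v ∉ f

/-- `m_k(G)`: the number of matchings of size `k` in `G`. -/
noncomputable def mkCount {V : Type*} [Fintype V] (G : SimpleGraph V) (k : ℕ) : ℕ :=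
  ((graphMatchings G).filter fun M => M.card = k).card

/-! A matching of `G_{x→y}` containing an edge `yv` with `v ∈ N_G(x,ȳ)` becomes a matching
of `G` of the same size once `x` and `y` are exchanged: `yv` goes to the `G`-edge `xv`, and an
edge `xu` of the matching has `u ∉ N_G(x,ȳ)`, so `yu` is an edge of `G`. Every other matching of
`G_{x→y}` is already a matching of `G`. The images of the two kinds are told apart by whether
they contain an edge `xv` with `v ∈ N_G(x,ȳ)`, so this map is injective. -/

open Finset Function

section
variable {V : Type*} {G : SimpleGraph V} {x y : V}

theorem compress_adj {a b : V} :
    (compress G x y).Adj a b ↔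
      (G.Adj a b ∧ ¬(a = x ∧ b ∈ sideNbhd G x y ∨ b = x ∧ a ∈ sideNbhd G x y)) ∨
        (a = y ∧ b ∈ sideNbhd G x y ∨ b = y ∧ a ∈ sideNbhd G x y) := by
  simp only [compress, SimpleGraph.fromEdgeSet_adj, Set.mem_union, Set.mem_sdiff,
    SimpleGraph.mem_edgeSet, Set.mem_ofPred_eq, Sym2.eq_iff]
  unfold sideNbhd
  grind [SimpleGraph.Adj.ne]

theorem notMem_edgeSet_compress {v : V} (hv : v ∈ sideNbhd G x y) :
    s(x, v) ∉ (compress G x y).edgeSet := by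
  rw [SimpleGraph.mem_edgeSet, compress_adj]
  unfold sideNbhd at *
  grind

theorem mem_edgeSet_of_mem_edgeSet_compress {e : Sym2 V} (he : e ∈ (compress G x y).edgeSet)
    (hy : ∀ v ∈ sideNbhd G x y, e ≠ s(y, v)) : e ∈ G.edgeSet := by
  rw [compress, SimpleGraph.edgeSet_fromEdgeSet] at he
  obtain ⟨⟨heG, -⟩ | ⟨v, hv, rfl⟩, -⟩ := he
  · exact heG
  · exact absurd rfl (hy v hv)

theorem compress_adj_swap {a b : V} (h : (compress G x y).Adj a b)
    (ha : a = y → b ∈ sideNbhd G x y) (hb : b = y → a ∈ sideNbhd G x y) :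
    G.Adj (Equiv.swap x y a) (Equiv.swap x y b) := by
  rw [compress_adj] at h
  unfold sideNbhd at *
  rw [Equiv.swap_apply_def, Equiv.swap_apply_def]
  split_ifs <;> grind [SimpleGraph.Adj.symm, SimpleGraph.irrefl]

theorem map_swap_mem_edgeSet_of_mem_edgeSet_compress {e : Sym2 V} {v : V}
    (he : e ∈ (compress G x y).edgeSet) (hv : v ∈ sideNbhd G x y) (hy : y ∈ e → e = s(y, v)) :
    e.map (Equiv.swap x y) ∈ G.edgeSet := by
  induction e using Sym2.ind with | _ a b =>
  refine compress_adj_swap he (fun ha => ?_) (fun hb => ?_)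
  · subst ha
    rwa [Sym2.congr_right.1 (hy (Sym2.mem_mk_left _ _))]
  · subst hb
    rwa [Sym2.congr_right.1 (Sym2.eq_swap.trans (hy (Sym2.mem_mk_right _ _)))]

end

theorem pairwise_vertexDisjoint_image_map {V W : Type*} {f : V → W} (hf : Injective f)
    {M : Set (Sym2 V)} (hM : M.Pairwise fun e e' => ∀ v ∈ e, v ∉ e') :
    (Sym2.map f '' M).Pairwise fun e e' => ∀ v ∈ e, v ∉ e' := by
  rw [(Sym2.map.injective hf).injOn.pairwise_image]
  intro e he e' he' hne w hw hw'
  obtain ⟨a, ha, rfl⟩ := Sym2.mem_map.1 hw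
  obtain ⟨b, hb, hab⟩ := Sym2.mem_map.1 hw'
  exact hM he he' hne a ha (hf hab ▸ hb)

section
variable {V : Type*} [Fintype V] {G : SimpleGraph V} {x y : V}

theorem mem_graphMatchings {M : Finset (Sym2 V)} :
    M ∈ graphMatchings G ↔
      ↑M ⊆ G.edgeSet ∧ (M : Set (Sym2 V)).Pairwise fun e e' => ∀ v ∈ e, v ∉ e' := by
  simp [graphMatchings, Set.Pairwise, Finset.subset_iff, Set.subset_def]

noncomputable def uncompress (G : SimpleGraph V) (x y : V) (M : Finset (Sym2 V)) :
    Finset (Sym2 V) :=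
  if ∃ v ∈ sideNbhd G x y, s(y, v) ∈ M then M.map (Equiv.swap x y).toEmbedding.sym2Map else M

theorem card_uncompress (M : Finset (Sym2 V)) : #(uncompress G x y M) = #M := by
  unfold uncompress
  split_ifs <;> simp only [card_map]

theorem uncompress_mem_graphMatchings {M : Finset (Sym2 V)}
    (hM : M ∈ graphMatchings (compress G x y)) : uncompress G x y M ∈ graphMatchings G := by
  rw [mem_graphMatchings] at hM ⊢
  obtain ⟨hsub, hdisj⟩ := hM
  unfold uncompress
  split_ifs with h
  · obtain ⟨v, hv, hyv⟩ := h
    simp only [coe_map, Embedding.sym2Map_apply, Equiv.coe_toEmbedding]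
    refine ⟨?_, pairwise_vertexDisjoint_image_map (Equiv.injective _) hdisj⟩
    rintro _ ⟨e, he, rfl⟩
    refine map_swap_mem_edgeSet_of_mem_edgeSet_compress (hsub he) hv fun hye => ?_
    by_contra hne
    exact hdisj he hyv hne y hye (Sym2.mem_mk_left _ _)
  · refine ⟨fun e he => mem_edgeSet_of_mem_edgeSet_compress (hsub he) ?_, hdisj⟩
    rintro v hv rfl
    exact h ⟨v, hv, he⟩

theorem exists_mem_uncompress_iff {M : Finset (Sym2 V)}
    (hM : M ∈ graphMatchings (compress G x y)) :
    (∃ v ∈ sideNbhd G x y, s(x, v) ∈ uncompress G x y M) ↔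
      ∃ v ∈ sideNbhd G x y, s(y, v) ∈ M := by
  unfold uncompress
  split_ifs with h
  · refine iff_of_true ?_ h
    obtain ⟨v, hv, hyv⟩ := h
    refine ⟨v, hv, mem_map.2 ⟨_, hyv, ?_⟩⟩
    simp [Equiv.swap_apply_of_ne_of_ne hv.1 hv.2.1]
  · refine iff_of_false ?_ h
    rintro ⟨v, hv, hxv⟩
    exact notMem_edgeSet_compress hv ((mem_graphMatchings.1 hM).1 hxv)

theorem injOn_uncompress :
    Set.InjOn (uncompress G x y) (graphMatchings (compress G x y)) := by
  intro M₁ h₁ M₂ h₂ heq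
  have hiff := (exists_mem_uncompress_iff h₁).symm.trans (heq ▸ exists_mem_uncompress_iff h₂)
  unfold uncompress at heq
  by_cases h : ∃ v ∈ sideNbhd G x y, s(y, v) ∈ M₁
  · rwa [if_pos h, if_pos (hiff.1 h), map_inj] at heq
  · rwa [if_neg h, if_neg (hiff.not.1 h)] at heq

end

/-- For every simple graph `G`, all vertices `x, y` of `G`, and every `k ≥ 0`, the
compression `G_{x→y}` satisfies `m_k(G_{x→y}) ≤ m_k(G)`. -/
theorem mk_compress_le {V : Type*} [Fintype V] (G : SimpleGraph V) (x y : V) (k : ℕ) :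
    mkCount (compress G x y) k ≤ mkCount G k := by
  refine card_le_card_of_injOn (uncompress G x y) (fun M hM => ?_)
    (injOn_uncompress.mono fun M hM => (mem_filter.1 hM).1)
  obtain ⟨hM, hk⟩ := mem_filter.1 hM
  exact mem_filter.2 ⟨uncompress_mem_graphMatchings hM, (card_uncompress M).trans hk⟩
end

section
/- Let B be a Young diagram in an ℓ×r frame with ℓ ≤ r. Suppose B admits no out-block move (there is no out-corner P of B and in-corner P′ of B with s(P) < s(P′)), and suppose B is not the lex-least Young diagram with |B| boxes in the frame, i.e., B is not of the form consisting of q full rows of length r followed by one row of length c where |B| = qr + c with 0 ≤ c < r. Then there exists P ∈ B such that the transpose of B at P is legal and B*_P <_L B. -/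
open Classical

/-- `B` is a Young diagram in an `ℓ × r` frame: every box lies in
`{1,…,ℓ} × {1,…,r}`, and boxes are closed under moving up and to the left. -/
def IsYoung (ℓ r : ℕ) (B : Finset (ℕ × ℕ)) : Prop :=
  (∀ p ∈ B, 1 ≤ p.1 ∧ p.1 ≤ ℓ ∧ 1 ≤ p.2 ∧ p.2 ≤ r) ∧
  (∀ p ∈ B, 1 < p.1 → (p.1 - 1, p.2) ∈ B) ∧
  (∀ p ∈ B, 1 < p.2 → (p.1, p.2 - 1) ∈ B)

/-- The matchings of a Young diagram `B`: subsets of `B` in which all first coordinates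
are distinct and all second coordinates are distinct (placements of non-attacking rooks). -/
noncomputable def ydMatchings (B : Finset (ℕ × ℕ)) : Finset (Finset (ℕ × ℕ)) :=
  B.powerset.filter fun M => ∀ p ∈ M, ∀ q ∈ M, p ≠ q → p.1 ≠ q.1 ∧ p.2 ≠ q.2

/-- `m(B)`: the total number of matchings of the Young diagram `B`. -/
noncomputable def ydM (B : Finset (ℕ × ℕ)) : ℕ := (ydMatchings B).card

/-- `m_k(B)`: the number of size-`k` matchings of the Young diagram `B`. -/
noncomputable def ydMk (B : Finset (ℕ × ℕ)) (k : ℕ) : ℕ :=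
  ((ydMatchings B).filter fun M => M.card = k).card

/-- `P` is an out-corner of the Young diagram `B` in the `ℓ × r` frame. -/
def OutCorner (ℓ r : ℕ) (B : Finset (ℕ × ℕ)) (P : ℕ × ℕ) : Prop :=
  P ∈ B ∧ IsYoung ℓ r (B.erase P)

/-- `Q` is an in-corner of the Young diagram `B` in the `ℓ × r` frame. -/
def InCorner (ℓ r : ℕ) (B : Finset (ℕ × ℕ)) (Q : ℕ × ℕ) : Prop :=
  Q ∉ B ∧ IsYoung ℓ r (insert Q B)

/-- The transpose of `B` at `P = (i,j)`:
`B*_P = {(a,b) ∈ B : a < i or b < j} ∪ {(b-j+i, a-i+j) : (a,b) ∈ B, a ≥ i, b ≥ j}`. -/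
noncomputable def transposeAt (B : Finset (ℕ × ℕ)) (i j : ℕ) : Finset (ℕ × ℕ) :=
  B.filter (fun p => p.1 < i ∨ p.2 < j) ∪
    (B.filter fun p => i ≤ p.1 ∧ j ≤ p.2).image fun p => (p.2 - j + i, p.1 - i + j)

/-- Strict lex order on boxes: `(a,b) ≲ (c,d)` (strictly) iff `a < c`, or `a = c` and
`b < d`. -/
def boxLt (p q : ℕ × ℕ) : Prop := p.1 < q.1 ∨ (p.1 = q.1 ∧ p.2 < q.2)

/-- Lex order on Young diagrams: `B <_L B'` iff the `≲`-least element of `B △ B'`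
belongs to `B`. -/
def ydLexLt (B B' : Finset (ℕ × ℕ)) : Prop :=
  ∃ p ∈ symmDiff B B', p ∈ B ∧ ∀ q ∈ symmDiff B B', q ≠ p → boxLt p q

/-- The lex-least Young diagram with `N` boxes in an `ℓ × r` frame: `q` full rows of
length `r` followed by one row of length `c`, where `N = q * r + c` with `0 ≤ c < r`;
equivalently, box `(i,j)` is present iff `(i-1) * r + j ≤ N`. -/
noncomputable def lexYD (ℓ r N : ℕ) : Finset (ℕ × ℕ) :=
  ((Finset.Icc 1 ℓ) ×ˢ (Finset.Icc 1 r)).filter fun p => (p.1 - 1) * r + p.2 ≤ N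

/-!
Write `λ_a` for the length of row `a` and `c_b` for the length of column `b`. Since `B` is not
lex-least, some row is neither empty nor full; let `i` be the first one, so the rows above it are
full, and let `t` be the last nonempty row. Then `(t, λ_t)` is an out-corner and `(i, λ_i + 1)`
an in-corner, so the absence of out-block moves gives `i + λ_i < t + λ_t ≤ c_j + j` for `j = λ_t`.
Take the least column `j` with `i + λ_i < c_j + j` and transpose at `(i, j)`. The rows above `i`
do not change, and row `i` gets length `c_j + j - i > λ_i`, so the result is lex-smaller. By the
minimality of `j` (or by `ℓ ≤ r` when `j = 1`) this row still fits in the frame, and since row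
`i - 1` is full the result is again a Young diagram.
-/

open Finset

noncomputable def rowLen (B : Finset (ℕ × ℕ)) (a : ℕ) : ℕ := (B.filter (·.1 = a)).sup Prod.snd

noncomputable def colLen (B : Finset (ℕ × ℕ)) (b : ℕ) : ℕ := (B.filter (·.2 = b)).sup Prod.fst

lemma le_rowLen_of_mem {B : Finset (ℕ × ℕ)} {a b : ℕ} (h : (a, b) ∈ B) : b ≤ rowLen B a :=
  Finset.le_sup (f := Prod.snd) (mem_filter.2 ⟨h, rfl⟩ : (a, b) ∈ B.filter (·.1 = a))

lemma le_colLen_of_mem {B : Finset (ℕ × ℕ)} {a b : ℕ} (h : (a, b) ∈ B) : a ≤ colLen B b :=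
  Finset.le_sup (f := Prod.fst) (mem_filter.2 ⟨h, rfl⟩ : (a, b) ∈ B.filter (·.2 = b))

lemma lexYD_mul_eq_Icc_prod {ℓ r t : ℕ} (ht : t ≤ ℓ) :
    lexYD ℓ r (t * r) = Icc 1 t ×ˢ Icc 1 r := by
  ext ⟨x, y⟩
  simp only [lexYD, mem_filter, mem_product, mem_Icc]
  constructor
  · rintro ⟨⟨⟨hx, -⟩, hy, hyr⟩, hle⟩
    refine ⟨⟨hx, ?_⟩, hy, hyr⟩
    by_contra! htx
    have : t * r ≤ (x - 1) * r := Nat.mul_le_mul_right r (by omega)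
    omega
  · rintro ⟨⟨hx, hxt⟩, hy, hyr⟩
    refine ⟨⟨⟨hx, hxt.trans ht⟩, hy, hyr⟩, ?_⟩
    have : (x - 1 + 1) * r ≤ t * r := Nat.mul_le_mul_right r (by omega)
    rw [add_one_mul] at this
    omega

lemma mem_transposeAt {B : Finset (ℕ × ℕ)} {i j x y : ℕ} :
    (x, y) ∈ transposeAt B i j ↔
      (x, y) ∈ B ∧ (x < i ∨ y < j) ∨ i ≤ x ∧ j ≤ y ∧ (y - j + i, x - i + j) ∈ B := by
  simp only [transposeAt, mem_union, mem_filter, mem_image, Prod.mk.injEq, Prod.exists]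
  constructor
  · rintro (h | ⟨a, b, ⟨hab, hia, hjb⟩, rfl, rfl⟩)
    · exact Or.inl h
    · refine Or.inr ⟨by omega, by omega, ?_⟩
      rwa [show a - i + j - j + i = a by omega, show b - j + i - i + j = b by omega]
  · rintro (h | ⟨hix, hjy, hB⟩)
    · exact Or.inl h
    · exact Or.inr ⟨_, _, ⟨hB, by omega, by omega⟩, by omega, by omega⟩

lemma ydLexLt_of_forall_boxLt {T B : Finset (ℕ × ℕ)} {p : ℕ × ℕ} (hpT : p ∈ T) (hpB : p ∉ B)
    (hbelow : ∀ q, boxLt q p → (q ∈ T ↔ q ∈ B)) : ydLexLt T B := by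
  refine ⟨p, mem_symmDiff.2 (Or.inl ⟨hpT, hpB⟩), hpT, fun q hq hqp => ?_⟩
  have hqlt : ¬ boxLt q p := fun h => by
    rcases mem_symmDiff.1 hq with ⟨hT, hB⟩ | ⟨hB, hT⟩
    · exact hB ((hbelow q h).1 hT)
    · exact hT ((hbelow q h).2 hB)
  unfold boxLt at hqlt ⊢
  have : q.1 ≠ p.1 ∨ q.2 ≠ p.2 := by
    by_contra! h
    exact hqp (Prod.ext h.1 h.2)
  omega

namespace IsYoung

variable {ℓ r : ℕ} {B : Finset (ℕ × ℕ)} {i j : ℕ}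

lemma mem_of_le_fst (hB : IsYoung ℓ r B) {a a' b : ℕ} (h : (a, b) ∈ B) (ha' : 1 ≤ a')
    (hle : a' ≤ a) : (a', b) ∈ B := by
  induction a, hle using Nat.le_induction with
  | base => exact h
  | succ a _ ih => exact ih (by simpa using hB.2.1 _ h (by simp; omega))

lemma mem_of_le_snd (hB : IsYoung ℓ r B) {a b b' : ℕ} (h : (a, b) ∈ B) (hb' : 1 ≤ b')
    (hle : b' ≤ b) : (a, b') ∈ B := by
  induction b, hle using Nat.le_induction with
  | base => exact h
  | succ b _ ih => exact ih (by simpa using hB.2.2 _ h (by simp; omega))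

lemma mem_iff_le_rowLen (hB : IsYoung ℓ r B) {a b : ℕ} :
    (a, b) ∈ B ↔ 1 ≤ b ∧ b ≤ rowLen B a := by
  refine ⟨fun h => ⟨(hB.1 _ h).2.2.1, le_rowLen_of_mem h⟩, fun ⟨hb, hbl⟩ => ?_⟩
  obtain ⟨p, hp, hpl⟩ := exists_mem_eq_sup (B.filter (·.1 = a)) (nonempty_of_ne_empty fun he => by
    rw [rowLen, he, sup_empty, bot_eq_zero] at hbl; omega) Prod.snd
  obtain ⟨hpB, rfl⟩ := mem_filter.1 hp
  exact hB.mem_of_le_snd hpB hb (hbl.trans_eq hpl)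

lemma mem_iff_le_colLen (hB : IsYoung ℓ r B) {a b : ℕ} :
    (a, b) ∈ B ↔ 1 ≤ a ∧ a ≤ colLen B b := by
  refine ⟨fun h => ⟨(hB.1 _ h).1, le_colLen_of_mem h⟩, fun ⟨ha, hal⟩ => ?_⟩
  obtain ⟨p, hp, hpl⟩ := exists_mem_eq_sup (B.filter (·.2 = b)) (nonempty_of_ne_empty fun he => by
    rw [colLen, he, sup_empty, bot_eq_zero] at hal; omega) Prod.fst
  obtain ⟨hpB, rfl⟩ := mem_filter.1 hp
  exact hB.mem_of_le_fst hpB ha (hal.trans_eq hpl)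

lemma le_rowLen_iff_le_colLen (hB : IsYoung ℓ r B) {a b : ℕ} (ha : 1 ≤ a) (hb : 1 ≤ b) :
    b ≤ rowLen B a ↔ a ≤ colLen B b := by
  simpa [ha, hb] using (hB.mem_iff_le_rowLen (a := a) (b := b)).symm.trans hB.mem_iff_le_colLen

lemma rowLen_le (hB : IsYoung ℓ r B) (a : ℕ) : rowLen B a ≤ r :=
  Finset.sup_le fun p hp => (hB.1 p (mem_filter.1 hp).1).2.2.2

lemma colLen_le (hB : IsYoung ℓ r B) (b : ℕ) : colLen B b ≤ ℓ :=
  Finset.sup_le fun p hp => (hB.1 p (mem_filter.1 hp).1).2.1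

lemma rowLen_zero (hB : IsYoung ℓ r B) : rowLen B 0 = 0 :=
  Nat.eq_zero_of_le_zero <| Finset.sup_le fun p hp => by
    have := (hB.1 p (mem_filter.1 hp).1).1
    have := (mem_filter.1 hp).2
    omega

lemma rowLen_antitone (hB : IsYoung ℓ r B) {a a' : ℕ} (ha : 1 ≤ a) (hle : a ≤ a') :
    rowLen B a' ≤ rowLen B a := by
  rcases Nat.eq_zero_or_pos (rowLen B a') with h | h
  · omega
  · exact le_rowLen_of_mem (hB.mem_of_le_fst (hB.mem_iff_le_rowLen.2 ⟨h, le_rfl⟩) ha hle)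

lemma colLen_antitone (hB : IsYoung ℓ r B) {b b' : ℕ} (hb : 1 ≤ b) (hle : b ≤ b') :
    colLen B b' ≤ colLen B b := by
  rcases Nat.eq_zero_or_pos (colLen B b') with h | h
  · omega
  · exact le_colLen_of_mem (hB.mem_of_le_snd (hB.mem_iff_le_colLen.2 ⟨h, le_rfl⟩) hb hle)

lemma outCorner_of_rowLen_succ_lt (hB : IsYoung ℓ r B) {a : ℕ} (ha : 1 ≤ rowLen B a)
    (hnext : rowLen B (a + 1) < rowLen B a) : OutCorner ℓ r B (a, rowLen B a) := by
  refine ⟨hB.mem_iff_le_rowLen.2 ⟨ha, le_rfl⟩, fun p hp => hB.1 p (mem_of_mem_erase hp), ?_, ?_⟩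
  · rintro ⟨x, y⟩ hp hx
    obtain ⟨-, hpB⟩ := mem_erase.1 hp
    refine mem_erase.2 ⟨fun he => ?_, hB.2.1 _ hpB hx⟩
    simp only [Prod.mk.injEq] at hx he
    obtain ⟨rfl, rfl⟩ : x = a + 1 ∧ y = rowLen B a := ⟨by omega, he.2⟩
    have := le_rowLen_of_mem hpB
    omega
  · rintro ⟨x, y⟩ hp hy
    obtain ⟨-, hpB⟩ := mem_erase.1 hp
    refine mem_erase.2 ⟨fun he => ?_, hB.2.2 _ hpB hy⟩
    simp only [Prod.mk.injEq] at hy he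
    obtain ⟨rfl, h⟩ := he
    have := le_rowLen_of_mem hpB
    omega

lemma inCorner_of_rowLen_lt (hB : IsYoung ℓ r B) {a : ℕ} (ha : 1 ≤ a) (haℓ : a ≤ ℓ)
    (hr : rowLen B a < r) (hprev : 1 < a → rowLen B a < rowLen B (a - 1)) :
    InCorner ℓ r B (a, rowLen B a + 1) := by
  refine ⟨fun h => by have := le_rowLen_of_mem h; omega, ?_, ?_, ?_⟩
  · intro p hp
    rcases mem_insert.1 hp with rfl | h
    · exact ⟨ha, haℓ, by omega, by omega⟩
    · exact hB.1 p h
  · rintro ⟨x, y⟩ hp hx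
    refine mem_insert_of_mem ?_
    rcases mem_insert.1 hp with he | h
    · simp only [Prod.mk.injEq] at hx he
      obtain ⟨rfl, rfl⟩ := he
      exact hB.mem_iff_le_rowLen.2 ⟨by omega, hprev hx⟩
    · exact hB.2.1 _ h hx
  · rintro ⟨x, y⟩ hp hy
    refine mem_insert_of_mem ?_
    rcases mem_insert.1 hp with he | h
    · simp only [Prod.mk.injEq] at hy he
      obtain ⟨rfl, rfl⟩ := he
      simp only at hy ⊢
      exact hB.mem_iff_le_rowLen.2 ⟨by omega, by omega⟩
    · exact hB.2.2 _ h hy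

lemma eq_rectangle_of_rows_empty_or_full (hB : IsYoung ℓ r B)
    (hrows : ∀ a, rowLen B a = 0 ∨ rowLen B a = r) :
    B = Icc 1 (colLen B 1) ×ˢ Icc 1 r := by
  ext ⟨x, y⟩
  rw [mem_product, mem_Icc, mem_Icc, hB.mem_iff_le_rowLen]
  by_cases hx : 1 ≤ x
  · rw [← hB.le_rowLen_iff_le_colLen hx le_rfl]
    rcases hrows x with h | h <;> rw [h] <;> omega
  · have := hB.rowLen_zero
    rw [show x = 0 by omega]
    omega

lemma eq_lexYD_of_rows_empty_or_full (hB : IsYoung ℓ r B)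
    (hrows : ∀ a, rowLen B a = 0 ∨ rowLen B a = r) :
    B = lexYD ℓ r B.card := by
  have hrect := hB.eq_rectangle_of_rows_empty_or_full hrows
  rw [hrect, card_product, Nat.card_Icc, Nat.card_Icc, Nat.add_sub_cancel, Nat.add_sub_cancel,
    lexYD_mul_eq_Icc_prod (hB.colLen_le 1)]

lemma exists_first_partial_row (hB : IsYoung ℓ r B) (hne : B ≠ lexYD ℓ r B.card) :
    ∃ i, 1 ≤ i ∧ 0 < rowLen B i ∧ rowLen B i < r ∧ (1 < i → rowLen B (i - 1) = r) := by
  have hex : ∃ a, rowLen B a ≠ 0 ∧ rowLen B a ≠ r := by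
    by_contra! h
    exact hne (hB.eq_lexYD_of_rows_empty_or_full fun a => or_iff_not_imp_left.2 (h a))
  obtain ⟨hi0, hir⟩ := Nat.find_spec hex
  have hi : 1 ≤ Nat.find hex := by
    by_contra! h
    rw [Nat.lt_one_iff.1 h, hB.rowLen_zero] at hi0
    exact hi0 rfl
  refine ⟨Nat.find hex, hi, by omega, lt_of_le_of_ne (hB.rowLen_le _) hir, fun h1 => ?_⟩
  have hprev := Nat.find_min hex (show Nat.find hex - 1 < Nat.find hex by omega)
  have := hB.rowLen_antitone (show 1 ≤ Nat.find hex - 1 by omega) (Nat.sub_le _ 1)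
  push Not at hprev
  exact hprev (by omega)

lemma transposeAt_mem_frame (hB : IsYoung ℓ r B) (hi : 1 ≤ i) (hj : 1 ≤ j)
    (hlong : i + rowLen B i < colLen B j + j) (hfit : colLen B j + j ≤ i + r) :
    ∀ p ∈ transposeAt B i j, 1 ≤ p.1 ∧ p.1 ≤ ℓ ∧ 1 ≤ p.2 ∧ p.2 ≤ r := by
  rintro ⟨x, y⟩ hp
  rcases mem_transposeAt.1 hp with ⟨hxy, -⟩ | ⟨hix, hjy, hyx⟩
  · exact hB.1 _ hxy
  · have hrow := le_rowLen_of_mem (hB.mem_of_le_fst hyx (by omega) (by omega : i ≤ y - j + i))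
    have hcol := le_colLen_of_mem (hB.mem_of_le_snd hyx hj (by omega : j ≤ x - i + j))
    have := hB.colLen_le j
    simp only
    omega

lemma transposeAt_up_closed (hB : IsYoung ℓ r B) (hj : 1 ≤ j) (hfit : colLen B j + j ≤ i + r)
    (hfull : 1 < i → rowLen B (i - 1) = r) :
    ∀ p ∈ transposeAt B i j, 1 < p.1 → (p.1 - 1, p.2) ∈ transposeAt B i j := by
  rintro ⟨x, y⟩ hp hx
  simp only at hx ⊢
  rw [mem_transposeAt] at hp ⊢
  rcases hp with ⟨hxy, hor⟩ | ⟨hix, hjy, hyx⟩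
  · exact Or.inl ⟨hB.2.1 _ hxy hx, by omega⟩
  · rcases Nat.lt_or_ge i x with hlt | hge
    · refine Or.inr ⟨by omega, hjy, hB.mem_of_le_snd hyx (by omega) (by omega)⟩
    · -- the box lands in row `i - 1`, which is full
      obtain rfl : x = i := by omega
      rw [Nat.sub_self, zero_add] at hyx
      have hcol := le_colLen_of_mem hyx
      refine Or.inl ⟨hB.mem_iff_le_rowLen.2 ⟨by omega, ?_⟩, by omega⟩
      rw [hfull hx]
      omega

lemma transposeAt_left_closed (hB : IsYoung ℓ r B) (hi : 1 ≤ i)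
    (hlong : i + rowLen B i < colLen B j + j) :
    ∀ p ∈ transposeAt B i j, 1 < p.2 → (p.1, p.2 - 1) ∈ transposeAt B i j := by
  rintro ⟨x, y⟩ hp hy
  simp only at hy ⊢
  rw [mem_transposeAt] at hp ⊢
  rcases hp with ⟨hxy, hor⟩ | ⟨hix, hjy, hyx⟩
  · exact Or.inl ⟨hB.2.2 _ hxy hy, by omega⟩
  · rcases Nat.lt_or_ge j y with hlt | hge
    · exact Or.inr ⟨hix, by omega, hB.mem_of_le_fst hyx (by omega) (by omega)⟩
    · -- `x ≤ i + λ_i - j < c_j`, so the box lands in column `j - 1` of `B`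
      obtain rfl : y = j := by omega
      rw [Nat.sub_self, zero_add] at hyx
      have hrow := le_rowLen_of_mem hyx
      have hxy : (x, y) ∈ B := hB.mem_iff_le_colLen.2 ⟨by omega, by omega⟩
      exact Or.inl ⟨hB.mem_of_le_snd hxy (by omega) (by omega), by omega⟩

lemma isYoung_transposeAt (hB : IsYoung ℓ r B) (hi : 1 ≤ i) (hj : 1 ≤ j)
    (hlong : i + rowLen B i < colLen B j + j) (hfit : colLen B j + j ≤ i + r)
    (hfull : 1 < i → rowLen B (i - 1) = r) : IsYoung ℓ r (transposeAt B i j) :=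
  ⟨hB.transposeAt_mem_frame hi hj hlong hfit, hB.transposeAt_up_closed hj hfit hfull,
    hB.transposeAt_left_closed hi hlong⟩

lemma ydLexLt_transposeAt (hB : IsYoung ℓ r B) (hi : 1 ≤ i) (hj : 1 ≤ j) (hji : j ≤ rowLen B i)
    (hlong : i + rowLen B i < colLen B j + j) : ydLexLt (transposeAt B i j) B := by
  have hcol : ∀ y, j ≤ y → y ≤ rowLen B i + 1 → (y - j + i, i - i + j) ∈ B := fun y hjy hy => by
    rw [Nat.sub_self, zero_add]
    exact hB.mem_iff_le_colLen.2 ⟨by omega, by omega⟩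
  refine ydLexLt_of_forall_boxLt (p := (i, rowLen B i + 1))
    (mem_transposeAt.2 (Or.inr ⟨le_rfl, by omega, hcol _ (by omega) le_rfl⟩))
    (fun h => by have := le_rowLen_of_mem h; omega) ?_
  rintro ⟨x, y⟩ (hx | ⟨hx, hy⟩) <;> simp only at hx
  · rw [mem_transposeAt]
    exact ⟨fun h => by rcases h with h | h; exacts [h.1, by omega], fun h => Or.inl ⟨h, Or.inl hx⟩⟩
  · subst hx
    simp only at hy
    rw [mem_transposeAt, hB.mem_iff_le_rowLen]
    rcases Nat.lt_or_ge y j with hyj | hjy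
    · simp only [hB.mem_iff_le_rowLen, hyj, or_true, and_true]
      omega
    · simp only [hjy, le_refl, true_and, hcol y hjy (by omega), or_true, true_iff]
      omega

lemma exists_transposable_column (hB : IsYoung ℓ r B) (hlr : ℓ ≤ r) (hi : 1 ≤ i)
    (hir : rowLen B i < r)
    (hex : ∃ j₀, 1 ≤ j₀ ∧ j₀ ≤ rowLen B i ∧ i + rowLen B i < colLen B j₀ + j₀) :
    ∃ j, 1 ≤ j ∧ j ≤ rowLen B i ∧ i + rowLen B i < colLen B j + j ∧ colLen B j + j ≤ i + r := by
  have hex' : ∃ j, 1 ≤ j ∧ i + rowLen B i < colLen B j + j :=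
    hex.imp fun j₀ h => ⟨h.1, h.2.2⟩
  obtain ⟨hj, hlong⟩ := Nat.find_spec hex'
  obtain ⟨j₀, hj₀, hj₀i, hlong₀⟩ := hex
  have hle : Nat.find hex' ≤ j₀ := Nat.find_min' hex' ⟨hj₀, hlong₀⟩
  refine ⟨Nat.find hex', hj, hle.trans hj₀i, hlong, ?_⟩
  rcases Nat.eq_or_lt_of_le hj with h1 | h1
  · have := hB.colLen_le (Nat.find hex')
    omega
  · have hprev := Nat.find_min hex' (show Nat.find hex' - 1 < Nat.find hex' by omega)
    have := hB.colLen_antitone (show 1 ≤ Nat.find hex' - 1 by omega) (Nat.sub_le _ 1)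
    push Not at hprev
    have := hprev (by omega)
    omega

end IsYoung

/-- Let `B` be a Young diagram in an `ℓ × r` frame with `ℓ ≤ r`, admitting no out-block
move, and not equal to the lex-least Young diagram with `|B|` boxes in the frame.  Then
there is `P ∈ B` such that the transpose of `B` at `P` is legal and `B*_P <_L B`. -/
theorem exists_legal_transpose_lex_lt (ℓ r : ℕ) (hlr : ℓ ≤ r)
    (B : Finset (ℕ × ℕ)) (hB : IsYoung ℓ r B)
    (hnomove : ¬ ∃ P P' : ℕ × ℕ, OutCorner ℓ r B P ∧ InCorner ℓ r B P' ∧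
      P.1 + P.2 < P'.1 + P'.2)
    (hnotlex : B ≠ lexYD ℓ r B.card) :
    ∃ P ∈ B, IsYoung ℓ r (transposeAt B P.1 P.2) ∧ ydLexLt (transposeAt B P.1 P.2) B := by
  obtain ⟨i, hi, hi0, hir, hfull⟩ := hB.exists_first_partial_row hnotlex
  set t := colLen B 1
  have hit : i ≤ t := (hB.le_rowLen_iff_le_colLen hi le_rfl).1 hi0
  have ht0 : 1 ≤ rowLen B t := (hB.le_rowLen_iff_le_colLen (hi.trans hit) le_rfl).2 le_rfl
  have ht1 : rowLen B (t + 1) = 0 := by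
    by_contra h
    have := (hB.le_rowLen_iff_le_colLen (by omega) le_rfl).1 (Nat.one_le_iff_ne_zero.2 h)
    omega
  have hout := hB.outCorner_of_rowLen_succ_lt ht0 (by omega)
  have hin := hB.inCorner_of_rowLen_lt hi (hit.trans (hB.colLen_le 1)) hir
    fun h => (hfull h).symm ▸ hir
  have hlong : i + rowLen B i < t + rowLen B t := by
    by_contra! h
    exact hnomove ⟨_, _, hout, hin, by simp only; omega⟩
  have htcol : t ≤ colLen B (rowLen B t) := (hB.le_rowLen_iff_le_colLen (hi.trans hit) ht0).1 le_rfl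
  obtain ⟨j, hj, hji, hjlong, hjfit⟩ := hB.exists_transposable_column hlr hi hir
    ⟨rowLen B t, ht0, hB.rowLen_antitone hi hit, by omega⟩
  exact ⟨(i, j), hB.mem_iff_le_rowLen.2 ⟨hj, hji⟩,
    hB.isYoung_transposeAt hi hj hjlong hjfit hfull, hB.ydLexLt_transposeAt hi hj hji hjlong⟩
end
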